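/- Fix an integer n ≥ 1 and, for i = 1, 2, collision frequencies ν_i > 0, masses m_i > 0 and exponents γ_i with 1 < γ_i < (n+2)/n; set d_i := 2/(γ_i−1) − n, c_i := (2γ_i/(γ_i−1))^{−1/(γ_i−1)} Γ(γ_i/(γ_i−1))/(π^{n/2} Γ(d_i/2+1)), kinetic entropies h_i(g, v) := (m_i/2)|v|² g + (1/(2 c_i^{2/d_i})) g^{1+2/d_i}/(1+2/d_i), and truncated Maxwellians M_i[N,u](v) := c_i ( m_i^{n(γ_i−1)/2}(2γ_i/(γ_i−1)) N^{γ_i−1} − m_i|v−u|² )₊^{d_i/2}. Let f₁, f₂ : ℝⁿ → [0, ∞) be measurable with ∫(1+|v|²) f_i dv < ∞ and ∫ f_i^{1+2/d_i} dv < ∞, set N_i := ∫ f_i dv, and assume ν₁ m₁ N₁ + ν₂ m₂ N₂ > 0; define the common bulk velocity u := ( ν₁ m₁ ∫ v f₁ dv + ν₂ m₂ ∫ v f₂ dv ) / ( ν₁ m₁ N₁ + ν₂ m₂ N₂ ). Then the total kinetic entropy satisfies the minimization principle Σ_{i=1,2} ν_i ∫_{ℝⁿ} h_i(f_i(v), v)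 dv ≥ Σ_{i=1,2} ν_i ∫_{ℝⁿ} h_i(M_i[N_i, u](v), v) dv. -/

import Mathlib

open MeasureTheory

/-- The exponent `d = 2/(γ−1) − n`. -/
noncomputable def dExp (n : ℕ) (γ : ℝ) : ℝ := 2 / (γ - 1) - n

/-- The normalization constant
`c = (2γ/(γ−1))^{−1/(γ−1)} Γ(γ/(γ−1)) / (π^{n/2} Γ(d/2 + 1))`. -/
noncomputable def cNorm (n : ℕ) (γ : ℝ) : ℝ :=
  (2 * γ / (γ - 1)) ^ (-(1 / (γ - 1))) * Real.Gamma (γ / (γ - 1)) /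
    (Real.pi ^ ((n : ℝ) / 2) * Real.Gamma (dExp n γ / 2 + 1))

/-- The truncated Maxwellian
`M[N,u](v) = c (m^{n(γ−1)/2} (2γ/(γ−1)) N^{γ−1} − m|v−u|²)₊^{d/2}`. -/
noncomputable def maxwellian (n : ℕ) (m γ : ℝ) (N : ℝ) (u v : EuclideanSpace ℝ (Fin n)) : ℝ :=
  cNorm n γ *
    (max (m ^ ((n : ℝ) * (γ - 1) / 2) * (2 * γ / (γ - 1)) * N ^ (γ - 1)
        - m * ‖v - u‖ ^ 2) 0) ^ (dExp n γ / 2)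

/-- The kinetic entropy `h(g,v) = (m/2)|v|² g + (1/(2 c^{2/d})) g^{1+2/d}/(1+2/d)`. -/
noncomputable def kinEntropy (n : ℕ) (m γ : ℝ) (g : ℝ) (v : EuclideanSpace ℝ (Fin n)) : ℝ :=
  m / 2 * ‖v‖ ^ 2 * g +
    1 / (2 * cNorm n γ ^ (2 / dExp n γ)) * (g ^ (1 + 2 / dExp n γ) / (1 + 2 / dExp n γ))

/-!
For fixed `v`, `g ↦ h(g, v)` is convex with derivative `m|v|²/2 + c^{-2/d} g^{2/d}/2`, which at
`g = M[N,u](v)` equals `m|v|²/2 + (B − m|v−u|²)₊/2`, where `B` is the first term inside the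
truncation. This dominates the affine function `ψ(v) = m|v|²/2 + (B − m|v−u|²)/2` and agrees with it
where `M[N,u] > 0`, so `h(f, v) − h(M, v) ≥ ψ(v) (f − M)` pointwise for `f ≥ 0`. The constant `c` is
exactly what makes `M[N,u]` have mass `N`; by symmetry its momentum is `N u`. Integrating therefore
gives `∫ h(f) − ∫ h(M) ≥ m ⟨u, ∫ v f − N u⟩` for each species, and for the common velocity `u`
the two right-hand sides, weighted by `νᵢ`, cancel.
-/

open Set
open scoped RealInnerProductSpace

lemma intervalIntegral_rpow_mul_one_sub_rpow {a b : ℝ} (ha : 0 < a) (hb : 0 < b) :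
    ∫ x in (0 : ℝ)..1, x ^ (a - 1) * (1 - x) ^ (b - 1)
      = Real.Gamma a * Real.Gamma b / Real.Gamma (a + b) := by
  have hbeta : Complex.betaIntegral a b
      = ((∫ x in (0 : ℝ)..1, x ^ (a - 1) * (1 - x) ^ (b - 1) : ℝ) : ℂ) := by
    rw [Complex.betaIntegral, ← intervalIntegral.integral_ofReal]
    refine intervalIntegral.integral_congr fun x hx => ?_
    rw [uIcc_of_le zero_le_one] at hx
    rw [Complex.ofReal_mul, Complex.ofReal_cpow hx.1, Complex.ofReal_cpow (by linarith [hx.2])]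
    push_cast
    ring
  have key := Complex.Gamma_mul_Gamma_eq_betaIntegral (s := a) (t := b)
    (by simpa using ha) (by simpa using hb)
  rw [hbeta, ← Complex.ofReal_add, Complex.Gamma_ofReal, Complex.Gamma_ofReal,
    Complex.Gamma_ofReal] at key
  norm_cast at key
  rw [key, mul_div_cancel_left₀ _ (Real.Gamma_pos_of_pos (add_pos ha hb)).ne']

lemma integral_Ioi_pow_mul_max_one_sub_sq_rpow {k : ℕ} (hk : 1 ≤ k) {s : ℝ} (hs : 0 < s) :
    ∫ y in Ioi (0 : ℝ), y ^ (k - 1) • max (1 - y ^ 2) 0 ^ s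
      = Real.Gamma (k / 2) * Real.Gamma (s + 1) / Real.Gamma (k / 2 + (s + 1)) / 2 := by
  set g : ℝ → ℝ := fun t => t ^ (((k : ℝ) - 2) / 2) * max (1 - t) 0 ^ s / 2 with hg
  have hsubst : ∫ y in Ioi (0 : ℝ), y ^ (k - 1) • max (1 - y ^ 2) 0 ^ s
      = ∫ y in Ioi (0 : ℝ), (|2| * y ^ ((2 : ℝ) - 1)) • g (y ^ (2 : ℝ)) := by
    refine setIntegral_congr_fun measurableSet_Ioi fun y (hy : 0 < y) => ?_
    have hpow : (y ^ (2 : ℝ)) ^ (((k : ℝ) - 2) / 2) * y = y ^ (k - 1) := by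
      rw [← Real.rpow_mul hy.le, ← Real.rpow_add_one hy.ne', ← Real.rpow_natCast, Nat.cast_sub hk]
      ring_nf
    simp only [hg, smul_eq_mul, abs_two, ← hpow]
    norm_num
    ring
  have hsupport : ∫ t in Ioi (0 : ℝ), g t = ∫ t in Ioc (0 : ℝ) 1, g t := by
    have hvanish : ∀ t ∈ Ioi (0 : ℝ), g t = (Ioc (0 : ℝ) 1).indicator g t := by
      intro t (ht : 0 < t)
      by_cases h1 : t ≤ 1
      · rw [indicator_of_mem (mem_Ioc.2 ⟨ht, h1⟩)]
      · rw [indicator_of_notMem fun hmem => h1 hmem.2]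
        simp [hg, max_eq_right (by linarith : 1 - t ≤ 0), Real.zero_rpow hs.ne']
    rw [setIntegral_congr_fun measurableSet_Ioi hvanish, setIntegral_indicator measurableSet_Ioc,
      inter_eq_self_of_subset_right Ioc_subset_Ioi_self]
  have hbeta : ∫ t in Ioc (0 : ℝ) 1, g t
      = (∫ t in (0 : ℝ)..1, t ^ ((k : ℝ) / 2 - 1) * (1 - t) ^ ((s + 1) - 1)) / 2 := by
    rw [intervalIntegral.integral_of_le zero_le_one, ← integral_div]
    refine setIntegral_congr_fun measurableSet_Ioc fun t ht => ?_
    simp only [hg, max_eq_left (sub_nonneg.2 ht.2)]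
    ring_nf
  rw [hsubst, integral_comp_rpow_Ioi g two_ne_zero, hsupport, hbeta,
    intervalIntegral_rpow_mul_one_sub_rpow (by positivity) (by linarith)]

section Ball

variable {E : Type*} [NormedAddCommGroup E] [InnerProductSpace ℝ E] [FiniteDimensional ℝ E]
  [MeasurableSpace E] [BorelSpace E] [Nontrivial E]

lemma integral_max_one_sub_norm_sq_rpow {s : ℝ} (hs : 0 < s) :
    ∫ x : E, max (1 - ‖x‖ ^ 2) 0 ^ s
      = Real.pi ^ ((Module.finrank ℝ E : ℝ) / 2) * Real.Gamma (s + 1)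
          / Real.Gamma ((Module.finrank ℝ E : ℝ) / 2 + (s + 1)) := by
  set k := Module.finrank ℝ E with hk_def
  have hk : 0 < k := Module.finrank_pos
  have hvol : volume.real (Metric.ball (0 : E) 1)
      = Real.pi ^ ((k : ℝ) / 2) / Real.Gamma ((k : ℝ) / 2 + 1) := by
    rw [measureReal_def, InnerProductSpace.volume_ball, ENNReal.ofReal_one, one_pow, one_mul,
      ENNReal.toReal_ofReal (by positivity), Real.sqrt_eq_rpow, ← Real.rpow_natCast,
      ← Real.rpow_mul Real.pi_nonneg, ← hk_def]
    ring_nf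
  have hk2 : (0 : ℝ) < k / 2 := by positivity
  rw [integral_fun_norm_addHaar volume (fun r => max (1 - r ^ 2) 0 ^ s), ← hk_def, hvol,
    integral_Ioi_pow_mul_max_one_sub_sq_rpow hk hs, Real.Gamma_add_one hk2.ne',
    nsmul_eq_mul, smul_eq_mul]
  have := (Real.Gamma_pos_of_pos hk2).ne'
  field_simp

lemma integral_max_sub_mul_norm_sq_rpow {B m s : ℝ} (hB : 0 < B) (hm : 0 < m) (hs : 0 < s) :
    ∫ x : E, max (B - m * ‖x‖ ^ 2) 0 ^ s
      = (B / m) ^ ((Module.finrank ℝ E : ℝ) / 2) * B ^ s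
        * (Real.pi ^ ((Module.finrank ℝ E : ℝ) / 2) * Real.Gamma (s + 1)
          / Real.Gamma ((Module.finrank ℝ E : ℝ) / 2 + (s + 1))) := by
  set R := √(B / m) with hR_def
  have hR : 0 < R := Real.sqrt_pos.2 (div_pos hB hm)
  have hscale : ∀ x : E, max (B - m * ‖R • x‖ ^ 2) 0 ^ s = B ^ s * max (1 - ‖x‖ ^ 2) 0 ^ s := by
    intro x
    have hmR : m * R ^ 2 = B := by
      rw [Real.sq_sqrt (div_pos hB hm).le]
      field_simp
    have hmax : max (B * (1 - ‖x‖ ^ 2)) 0 = B * max (1 - ‖x‖ ^ 2) 0 := by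
      rw [mul_max_of_nonneg _ _ hB.le, mul_zero]
    rw [norm_smul, Real.norm_of_nonneg hR.le, mul_pow, ← mul_assoc, hmR, ← mul_one_sub, hmax,
      Real.mul_rpow hB.le (le_max_right _ _)]
  have hRk : R ^ Module.finrank ℝ E = (B / m) ^ ((Module.finrank ℝ E : ℝ) / 2) := by
    rw [hR_def, Real.sqrt_eq_rpow, ← Real.rpow_natCast, ← Real.rpow_mul (div_pos hB hm).le]
    ring_nf
  have h := Measure.integral_comp_smul volume (fun x : E => max (B - m * ‖x‖ ^ 2) 0 ^ s) R
  simp only [hscale, integral_const_mul, integral_max_one_sub_norm_sq_rpow hs, smul_eq_mul,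
    abs_inv, abs_of_pos (pow_pos hR _)] at h
  rw [eq_inv_mul_iff_mul_eq₀ (pow_pos hR _).ne', hRk] at h
  rw [← h]
  ring

end Ball

lemma integral_eq_zero_of_odd {E F : Type*} [NormedAddCommGroup E] [MeasurableSpace E]
    [MeasurableNeg E] [NormedAddCommGroup F] [NormedSpace ℝ F] {μ : Measure E}
    [μ.IsNegInvariant] {f : E → F} (hf : Function.Odd f) : ∫ x, f x ∂μ = 0 := by
  have h := integral_neg_eq_self f μ
  simp only [hf _, integral_neg] at h
  have h2 : (2 : ℝ) • ∫ x, f x ∂μ = 0 := by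
    rw [two_smul]
    nth_rewrite 1 [← h]
    exact neg_add_cancel _
  exact (smul_eq_zero.1 h2).resolve_left two_ne_zero

lemma mul_rpow_sub_one_mul_sub_le_rpow_sub_rpow {p x y : ℝ} (hp : 1 ≤ p) (hx : 0 ≤ x)
    (hy : 0 ≤ y) : p * y ^ (p - 1) * (x - y) ≤ x ^ p - y ^ p := by
  rcases hy.eq_or_lt with rfl | hy
  · rcases hp.eq_or_lt with rfl | hp
    · simp
    rw [Real.zero_rpow (by linarith), Real.zero_rpow (by linarith)]
    simpa using Real.rpow_nonneg hx p
  have hbernoulli := one_add_mul_self_le_rpow_one_add (s := x / y - 1)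
    (by linarith [div_nonneg hx hy.le]) hp
  rw [add_sub_cancel, Real.div_rpow hx hy.le, le_div_iff₀ (Real.rpow_pos_of_pos hy p)] at hbernoulli
  have hyp : y ^ p = y ^ (p - 1) * y := by
    rw [← Real.rpow_add_one hy.ne', sub_add_cancel]
  rw [hyp] at hbernoulli ⊢
  have : y ^ (p - 1) * y * (x / y - 1) = y ^ (p - 1) * (x - y) := by
    field_simp
  nlinarith

section Moments

variable {E : Type*} [NormedAddCommGroup E] [MeasurableSpace E] {μ : Measure E} {f : E → ℝ}

lemma Integrable.of_one_add_norm_sq_mul (hf : Measurable f) (hf0 : ∀ v, 0 ≤ f v)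
    (h : Integrable (fun v => (1 + ‖v‖ ^ 2) * f v) μ) : Integrable f μ :=
  h.mono' hf.aestronglyMeasurable <| .of_forall fun v => by
    rw [Real.norm_of_nonneg (hf0 v)]
    nlinarith [hf0 v, sq_nonneg ‖v‖]

lemma Integrable.norm_sq_mul_of_one_add_norm_sq_mul [OpensMeasurableSpace E] (hf : Measurable f)
    (hf0 : ∀ v, 0 ≤ f v) (h : Integrable (fun v => (1 + ‖v‖ ^ 2) * f v) μ) :
    Integrable (fun v => ‖v‖ ^ 2 * f v) μ :=
  h.mono' (by fun_prop) <| .of_forall fun v => by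
    rw [Real.norm_of_nonneg (by positivity [hf0 v])]
    nlinarith [hf0 v]

lemma Integrable.smul_self_of_one_add_norm_sq_mul [NormedSpace ℝ E] [OpensMeasurableSpace E]
    [SecondCountableTopology E] (hf : Measurable f) (hf0 : ∀ v, 0 ≤ f v)
    (h : Integrable (fun v => (1 + ‖v‖ ^ 2) * f v) μ) : Integrable (fun v => f v • v) μ :=
  h.mono' (hf.aestronglyMeasurable.smul aestronglyMeasurable_id) <| .of_forall fun v => by
    rw [norm_smul, Real.norm_of_nonneg (hf0 v)]
    nlinarith [hf0 v, mul_nonneg (hf0 v) (sq_nonneg (‖v‖ - 1))]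

end Moments

section AffineWeight

variable {E : Type*} [NormedAddCommGroup E] [InnerProductSpace ℝ E]

lemma add_inner_mul_eq (a r : ℝ) (w v : E) : (a + ⟪w, v⟫) * r = a * r + ⟪w, r • v⟫ := by
  rw [real_inner_smul_right]
  ring

variable [MeasurableSpace E] {μ : Measure E} {g : E → ℝ}

lemma integrable_add_inner_mul (hg : Integrable g μ) (hgv : Integrable (fun v => g v • v) μ)
    (a : ℝ) (w : E) : Integrable (fun v => (a + ⟪w, v⟫) * g v) μ := by
  simp only [add_inner_mul_eq]
  exact (hg.const_mul a).add (hgv.const_inner w)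

lemma integral_add_inner_mul [CompleteSpace E] (hg : Integrable g μ)
    (hgv : Integrable (fun v => g v • v) μ) (a : ℝ) (w : E) :
    ∫ v, (a + ⟪w, v⟫) * g v ∂μ = a * ∫ v, g v ∂μ + ⟪w, ∫ v, g v • v ∂μ⟫ := by
  simp only [add_inner_mul_eq]
  rw [integral_add (hg.const_mul a) (hgv.const_inner w), integral_const_mul, integral_inner hgv]

end AffineWeight

section Species

variable {n : ℕ} {m γ : ℝ}

lemma dExp_pos (hn : 1 ≤ n) (hγ : 1 < γ) (hγ' : γ < ((n : ℝ) + 2) / n) : 0 < dExp n γ := by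
  have hn0 : (0 : ℝ) < n := by exact_mod_cast hn
  have hγn : γ * n < n + 2 := (lt_div_iff₀ hn0).1 hγ'
  rw [dExp, sub_pos, lt_div_iff₀ (by linarith)]
  nlinarith

lemma cNorm_pos (hγ : 1 < γ) (hd : 0 < dExp n γ) : 0 < cNorm n γ := by
  have hγ1 : 0 < γ - 1 := by linarith
  unfold cNorm
  have := Real.Gamma_pos_of_pos (show 0 < γ / (γ - 1) by positivity)
  have := Real.Gamma_pos_of_pos (show 0 < dExp n γ / 2 + 1 by positivity)
  positivity

lemma maxwellian_add_right (N : ℝ) (u w : EuclideanSpace ℝ (Fin n)) :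
    maxwellian n m γ N u (w + u) = maxwellian n m γ N 0 w := by
  simp [maxwellian]

lemma maxwellian_zero_even (N : ℝ) : Function.Even (maxwellian n m γ N 0) := by
  intro w
  simp [maxwellian]

lemma continuous_maxwellian (hd : 0 < dExp n γ) (N : ℝ) (u : EuclideanSpace ℝ (Fin n)) :
    Continuous (maxwellian n m γ N u) := by
  unfold maxwellian
  fun_prop (disch := positivity)

lemma hasCompactSupport_maxwellian (hm : 0 < m) (hd : 0 < dExp n γ) (N : ℝ)
    (u : EuclideanSpace ℝ (Fin n)) : HasCompactSupport (maxwellian n m γ N u) := by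
  set B := m ^ ((n : ℝ) * (γ - 1) / 2) * (2 * γ / (γ - 1)) * N ^ (γ - 1)
  refine HasCompactSupport.intro (isCompact_closedBall u (|B| / m + 1)) fun v hv => ?_
  rw [Metric.mem_closedBall, not_le, dist_eq_norm] at hv
  have hBm : |B| < m * ‖v - u‖ ^ 2 := by
    have h1 : |B| / m < ‖v - u‖ ^ 2 := by nlinarith [div_nonneg (abs_nonneg B) hm.le]
    rwa [div_lt_iff₀' hm] at h1
  rw [maxwellian, max_eq_right (by linarith [le_abs_self B]), Real.zero_rpow (by positivity),
    mul_zero]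

lemma integrable_maxwellian (hm : 0 < m) (hd : 0 < dExp n γ) (N : ℝ)
    (u : EuclideanSpace ℝ (Fin n)) : Integrable (maxwellian n m γ N u) :=
  (continuous_maxwellian hd N u).integrable_of_hasCompactSupport
    (hasCompactSupport_maxwellian hm hd N u)

lemma integrable_maxwellian_smul (hm : 0 < m) (hd : 0 < dExp n γ) (N : ℝ)
    (u : EuclideanSpace ℝ (Fin n)) : Integrable fun v => maxwellian n m γ N u v • v :=
  ((continuous_maxwellian hd N u).smul continuous_id).integrable_of_hasCompactSupport
    (hasCompactSupport_maxwellian hm hd N u).smul_right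

lemma integral_maxwellian (hn : 1 ≤ n) (hm : 0 < m) (hγ : 1 < γ) (hd : 0 < dExp n γ) {N : ℝ}
    (hN : 0 ≤ N) (u : EuclideanSpace ℝ (Fin n)) :
    ∫ v, maxwellian n m γ N u v = N := by
  have hγ1 : 0 < γ - 1 := by linarith
  rw [← integral_add_right_eq_self _ u]
  simp only [maxwellian_add_right]
  rcases hN.eq_or_lt with rfl | hN
  · have hzero : ∀ v : EuclideanSpace ℝ (Fin n), maxwellian n m γ 0 0 v = 0 := fun v => by
      rw [maxwellian, Real.zero_rpow hγ1.ne', mul_zero, zero_sub, sub_zero,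
        max_eq_right (neg_nonpos.2 (by positivity)), Real.zero_rpow (half_pos hd).ne', mul_zero]
    simp [hzero]
  have : Nontrivial (EuclideanSpace ℝ (Fin n)) :=
    have : Nonempty (Fin n) := ⟨⟨0, hn⟩⟩
    inferInstance
  set d := dExp n γ with hd_def
  set K := 2 * γ / (γ - 1)
  have hK : 0 < K := by positivity
  set B := m ^ ((n : ℝ) * (γ - 1) / 2) * K * N ^ (γ - 1)
  have hB : 0 < B := by positivity
  have hdn : (n : ℝ) / 2 + d / 2 = 1 / (γ - 1) := by
    rw [hd_def, dExp]
    ring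
  have hBpow : (B / m) ^ ((n : ℝ) / 2) * B ^ (d / 2) = K ^ (1 / (γ - 1)) * N := by
    rw [Real.div_rpow hB.le hm.le, div_mul_eq_mul_div, ← Real.rpow_add hB, hdn,
      Real.mul_rpow (by positivity) (by positivity), Real.mul_rpow (by positivity) hK.le,
      ← Real.rpow_mul hm.le, ← Real.rpow_mul hN.le, mul_one_div_cancel hγ1.ne', Real.rpow_one]
    field_simp
  have hGamma : (n : ℝ) / 2 + (d / 2 + 1) = γ / (γ - 1) := by
    rw [← add_assoc, hdn]
    field_simp
    ring
  have hΓ := (Real.Gamma_pos_of_pos (show 0 < d / 2 + 1 by positivity)).ne'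
  have hΓ' := (Real.Gamma_pos_of_pos (show 0 < γ / (γ - 1) by positivity)).ne'
  have hπ := (Real.rpow_pos_of_pos Real.pi_pos ((n : ℝ) / 2)).ne'
  have hKa := (Real.rpow_pos_of_pos hK (1 / (γ - 1))).ne'
  simp only [maxwellian, sub_zero]
  rw [integral_const_mul, integral_max_sub_mul_norm_sq_rpow hB hm (half_pos hd),
    finrank_euclideanSpace_fin, hBpow, hGamma, cNorm, ← hd_def, Real.rpow_neg hK.le]
  field_simp

lemma integral_maxwellian_smul (hn : 1 ≤ n) (hm : 0 < m) (hγ : 1 < γ) (hd : 0 < dExp n γ)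
    {N : ℝ} (hN : 0 ≤ N) (u : EuclideanSpace ℝ (Fin n)) :
    ∫ v, maxwellian n m γ N u v • v = N • u := by
  have hcentered : ∫ v, maxwellian n m γ N u v • (v - u) = 0 := by
    rw [← integral_add_right_eq_self _ u]
    simp only [maxwellian_add_right, add_sub_cancel_right]
    refine integral_eq_zero_of_odd fun w => ?_
    rw [maxwellian_zero_even, smul_neg]
  have hsplit : (fun v => maxwellian n m γ N u v • v)
      = fun v => maxwellian n m γ N u v • (v - u) + maxwellian n m γ N u v • u := by
    ext1 v
    rw [← smul_add, sub_add_cancel]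
  rw [hsplit, integral_add, hcentered, integral_smul_const, integral_maxwellian hn hm hγ hd hN,
    zero_add]
  · simp only [smul_sub]
    exact (integrable_maxwellian_smul hm hd N u).sub
      ((integrable_maxwellian hm hd N u).smul_const u)
  · exact (integrable_maxwellian hm hd N u).smul_const u

lemma kinEntropy_sub_kinEntropy_ge (hγ : 1 < γ) (hd : 0 < dExp n γ) (t : ℝ)
    (v : EuclideanSpace ℝ (Fin n)) {g : ℝ} (hg : 0 ≤ g) :
    (m / 2 * ‖v‖ ^ 2 + t / 2) * (g - cNorm n γ * max t 0 ^ (dExp n γ / 2))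
      ≤ kinEntropy n m γ g v - kinEntropy n m γ (cNorm n γ * max t 0 ^ (dExp n γ / 2)) v := by
  have hc := cNorm_pos hγ hd
  set d := dExp n γ
  set c := cNorm n γ
  set M := c * max t 0 ^ (d / 2) with hM_def
  set p := 1 + 2 / d
  have hp : 1 < p := by simp only [p]; linarith [div_pos two_pos hd]
  have hM : 0 ≤ M := by positivity
  have hMp : M ^ (p - 1) = c ^ (2 / d) * max t 0 := by
    rw [add_sub_cancel_left, Real.mul_rpow hc.le (by positivity),
      ← Real.rpow_mul (le_max_right _ _), div_mul_div_cancel₀ two_ne_zero, div_self hd.ne', Real.rpow_one]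
  have htrunc : t * (g - M) ≤ max t 0 * (g - M) := by
    rcases le_or_gt t 0 with ht | ht
    · rw [hM_def, max_eq_right ht, Real.zero_rpow (half_pos hd).ne']
      nlinarith
    · rw [max_eq_left ht.le]
  have htangent := mul_rpow_sub_one_mul_sub_le_rpow_sub_rpow hp.le hg hM
  have hb : 0 < 1 / (2 * c ^ (2 / d)) := by positivity
  have hkey : t / 2 * (g - M) ≤ 1 / (2 * c ^ (2 / d)) * (g ^ p / p - M ^ p / p) := by
    calc t / 2 * (g - M) ≤ 1 / (2 * c ^ (2 / d)) * M ^ (p - 1) * (g - M) := by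
          rw [hMp]
          field_simp
          linarith
      _ ≤ 1 / (2 * c ^ (2 / d)) * (g ^ p / p - M ^ p / p) := by
          rw [mul_assoc, ← sub_div]
          gcongr
          rw [le_div_iff₀ (by linarith)]
          linarith
  unfold kinEntropy
  linarith

lemma integrable_kinEntropy {g : EuclideanSpace ℝ (Fin n) → ℝ}
    (h₁ : Integrable fun v => ‖v‖ ^ 2 * g v) (h₂ : Integrable fun v => g v ^ (1 + 2 / dExp n γ)) :
    Integrable fun v => kinEntropy n m γ (g v) v :=
  ((h₁.const_mul (m / 2)).add ((h₂.div_const (1 + 2 / dExp n γ)).const_mul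
      (1 / (2 * cNorm n γ ^ (2 / dExp n γ))))).congr <| .of_forall fun v => by
    simp only [kinEntropy, Pi.add_apply]
    ring

lemma integrable_kinEntropy_maxwellian (hm : 0 < m) (hd : 0 < dExp n γ) (N : ℝ)
    (u : EuclideanSpace ℝ (Fin n)) :
    Integrable fun v => kinEntropy n m γ (maxwellian n m γ N u v) v := by
  have hc := continuous_maxwellian (m := m) hd N u
  have hs := hasCompactSupport_maxwellian hm hd N u
  have hp : 0 < 1 + 2 / dExp n γ := by positivity
  refine integrable_kinEntropy ?_ ?_
  · exact ((continuous_norm.pow 2).mul hc).integrable_of_hasCompactSupport hs.mul_left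
  · exact (hc.rpow_const fun _ => Or.inr hp.le).integrable_of_hasCompactSupport
      (hs.comp_left (g := fun x => x ^ (1 + 2 / dExp n γ)) (Real.zero_rpow hp.ne'))

lemma integral_kinEntropy_maxwellian_le (hn : 1 ≤ n) (hm : 0 < m) (hγ : 1 < γ)
    (hd : 0 < dExp n γ) {f : EuclideanSpace ℝ (Fin n) → ℝ} (hf : Measurable f)
    (hf0 : ∀ v, 0 ≤ f v) (hfint : Integrable fun v => (1 + ‖v‖ ^ 2) * f v)
    (hfpow : Integrable fun v => f v ^ (1 + 2 / dExp n γ)) (u : EuclideanSpace ℝ (Fin n)) :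
    ∫ v, kinEntropy n m γ (maxwellian n m γ (∫ w, f w) u v) v
      ≤ (∫ v, kinEntropy n m γ (f v) v) - m * ⟪u, (∫ w, f w • w) - (∫ w, f w) • u⟫ := by
  set N := ∫ w, f w
  have hN : 0 ≤ N := integral_nonneg hf0
  set M := maxwellian n m γ N u
  set B := m ^ ((n : ℝ) * (γ - 1) / 2) * (2 * γ / (γ - 1)) * N ^ (γ - 1)
  set a := B / 2 - m * ‖u‖ ^ 2 / 2
  have hpoint : ∀ v, (a + ⟪m • u, v⟫) * (f v - M v)
      ≤ kinEntropy n m γ (f v) v - kinEntropy n m γ (M v) v := by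
    intro v
    have hψ : a + ⟪m • u, v⟫ = m / 2 * ‖v‖ ^ 2 + (B - m * ‖v - u‖ ^ 2) / 2 := by
      rw [norm_sub_sq_real, real_inner_smul_left, real_inner_comm]
      ring
    rw [hψ]
    exact kinEntropy_sub_kinEntropy_ge hγ hd _ v (hf0 v)
  have hfi := Integrable.of_one_add_norm_sq_mul hf hf0 hfint
  have hfv := Integrable.smul_self_of_one_add_norm_sq_mul hf hf0 hfint
  have hMi := integrable_maxwellian hm hd N u
  have hMv := integrable_maxwellian_smul hm hd N u
  have hhf := integrable_kinEntropy (m := m)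
    (Integrable.norm_sq_mul_of_one_add_norm_sq_mul hf hf0 hfint) hfpow
  have hhM := integrable_kinEntropy_maxwellian hm hd N u
  have hg : Integrable fun v => f v - M v := hfi.sub hMi
  have hgv : Integrable fun v => (f v - M v) • v := by
    simp only [sub_smul]
    exact hfv.sub hMv
  have hmono := integral_mono (integrable_add_inner_mul hg hgv a (m • u))
    (hhf.sub hhM : Integrable fun v => kinEntropy n m γ (f v) v - kinEntropy n m γ (M v) v) hpoint
  simp only [integral_add_inner_mul hg hgv, sub_smul] at hmono
  rw [integral_sub hfi hMi, integral_sub hfv hMv, integral_sub hhf hhM,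
    integral_maxwellian hn hm hγ hd hN, integral_maxwellian_smul hn hm hγ hd hN, sub_self,
    mul_zero, zero_add, real_inner_smul_left] at hmono
  linarith

end Species

/-- Entropy minimization principle: for nonnegative integrable distributions
`f₁, f₂` with number densities `Nᵢ = ∫ fᵢ` and common bulk velocity
`u = (ν₁m₁∫vf₁ + ν₂m₂∫vf₂)/(ν₁m₁N₁ + ν₂m₂N₂)`, the total kinetic entropy of
`(f₁, f₂)` dominates that of the truncated Maxwellians `(M₁[N₁,u], M₂[N₂,u])`. -/
theorem total_entropy_minimization (n : ℕ) (hn : 1 ≤ n) (ν₁ ν₂ m₁ m₂ γ₁ γ₂ : ℝ)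
    (hν₁ : 0 < ν₁) (hν₂ : 0 < ν₂) (hm₁ : 0 < m₁) (hm₂ : 0 < m₂)
    (hγ₁ : 1 < γ₁) (hγ₁' : γ₁ < ((n : ℝ) + 2) / n)
    (hγ₂ : 1 < γ₂) (hγ₂' : γ₂ < ((n : ℝ) + 2) / n)
    (f₁ f₂ : EuclideanSpace ℝ (Fin n) → ℝ)
    (hf₁meas : Measurable f₁) (hf₂meas : Measurable f₂)
    (hf₁0 : ∀ v, 0 ≤ f₁ v) (hf₂0 : ∀ v, 0 ≤ f₂ v)
    (hf₁int : Integrable fun v : EuclideanSpace ℝ (Fin n) => (1 + ‖v‖ ^ 2) * f₁ v)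
    (hf₂int : Integrable fun v : EuclideanSpace ℝ (Fin n) => (1 + ‖v‖ ^ 2) * f₂ v)
    (hf₁pow : Integrable fun v : EuclideanSpace ℝ (Fin n) => f₁ v ^ (1 + 2 / dExp n γ₁))
    (hf₂pow : Integrable fun v : EuclideanSpace ℝ (Fin n) => f₂ v ^ (1 + 2 / dExp n γ₂))
    (hpos : 0 < ν₁ * m₁ * (∫ v : EuclideanSpace ℝ (Fin n), f₁ v)
        + ν₂ * m₂ * ∫ v : EuclideanSpace ℝ (Fin n), f₂ v) :
    ν₁ * (∫ v : EuclideanSpace ℝ (Fin n), kinEntropy n m₁ γ₁ (f₁ v) v)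
      + ν₂ * (∫ v : EuclideanSpace ℝ (Fin n), kinEntropy n m₂ γ₂ (f₂ v) v) ≥
    ν₁ * (∫ v : EuclideanSpace ℝ (Fin n),
        kinEntropy n m₁ γ₁
          (maxwellian n m₁ γ₁ (∫ w : EuclideanSpace ℝ (Fin n), f₁ w)
            ((ν₁ * m₁ * (∫ w : EuclideanSpace ℝ (Fin n), f₁ w)
                + ν₂ * m₂ * (∫ w : EuclideanSpace ℝ (Fin n), f₂ w))⁻¹ •
              ((ν₁ * m₁) • (∫ w : EuclideanSpace ℝ (Fin n), f₁ w • w)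
                + (ν₂ * m₂) • ∫ w : EuclideanSpace ℝ (Fin n), f₂ w • w)) v) v)
      + ν₂ * ∫ v : EuclideanSpace ℝ (Fin n),
          kinEntropy n m₂ γ₂
            (maxwellian n m₂ γ₂ (∫ w : EuclideanSpace ℝ (Fin n), f₂ w)
              ((ν₁ * m₁ * (∫ w : EuclideanSpace ℝ (Fin n), f₁ w)
                  + ν₂ * m₂ * (∫ w : EuclideanSpace ℝ (Fin n), f₂ w))⁻¹ •
                ((ν₁ * m₁) • (∫ w : EuclideanSpace ℝ (Fin n), f₁ w • w)
                  + (ν₂ * m₂) • ∫ w : EuclideanSpace ℝ (Fin n), f₂ w • w)) v) v := by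
  have hd₁ := dExp_pos hn hγ₁ hγ₁'
  have hd₂ := dExp_pos hn hγ₂ hγ₂'
  set N₁ := ∫ w, f₁ w
  set N₂ := ∫ w, f₂ w
  set I₁ := ∫ w, f₁ w • w
  set I₂ := ∫ w, f₂ w • w
  set u := (ν₁ * m₁ * N₁ + ν₂ * m₂ * N₂)⁻¹ • ((ν₁ * m₁) • I₁ + (ν₂ * m₂) • I₂)
  have h₁ := integral_kinEntropy_maxwellian_le hn hm₁ hγ₁ hd₁ hf₁meas hf₁0 hf₁int hf₁pow u
  have h₂ := integral_kinEntropy_maxwellian_le hn hm₂ hγ₂ hd₂ hf₂meas hf₂0 hf₂int hf₂pow u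
  have hbalance : (ν₁ * m₁) • (I₁ - N₁ • u) + (ν₂ * m₂) • (I₂ - N₂ • u) = 0 := by
    have hu : (ν₁ * m₁ * N₁ + ν₂ * m₂ * N₂) • u = (ν₁ * m₁) • I₁ + (ν₂ * m₂) • I₂ :=
      smul_inv_smul₀ hpos.ne' _
    linear_combination (norm := module) -hu
  have hdefect : ν₁ * (m₁ * ⟪u, I₁ - N₁ • u⟫) + ν₂ * (m₂ * ⟪u, I₂ - N₂ • u⟫) = 0 := by
    have := congrArg (⟪u, ·⟫) hbalance
    simp only [inner_add_right, real_inner_smul_right, inner_zero_right] at this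
    linarith
  linarith [mul_le_mul_of_nonneg_left h₁ hν₁.le, mul_le_mul_of_nonneg_left h₂ hν₂.le]
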